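/- arXiv:1802.01251 — 2 statements merged into one kernel-verified Lean document; each statement's English description precedes it below -/
import Mathlib

section
/- Let C and D be two neural codes in F_2^n. Then D ⊆ ^cC if and only if \overline{\overline{D}^p} ⊆ ^c(C^p), where both complements on the right are taken in F_2^{2n}. -/
open MvPolynomial

/-- The field with two elements. -/
abbrev F2 := ZMod 2

/-- A motif indexed by `ι`: at each index it is `0`, `1`, or `*` (represented by `none`). -/
abbrev Motif (ι : Type*) := ι → Option F2

/-- The partial order on motifs: `a ≤ b` iff `a i = b i` for every index `i` with `b i ≠ *`. -/
def MotifLE {ι : Type*} (a b : Motif ι) : Prop :=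
  ∀ (i : ι) (x : F2), b i = some x → a i = some x

/-- The variety of a motif: all words agreeing with the motif on its non-`*` coordinates. -/
def variety {ι : Type*} (a : Motif ι) : Set (ι → F2) :=
  {w | ∀ (i : ι) (x : F2), a i = some x → w i = x}

/-- `a` is a motif of the code `C` iff its variety is contained in `C`. -/
def IsMotifOf {ι : Type*} (C : Set (ι → F2)) (a : Motif ι) : Prop :=
  variety a ⊆ C

/-- The set of maximal motifs of a code `C`. -/
def maxMot {ι : Type*} (C : Set (ι → F2)) : Set (Motif ι) :=
  {a | IsMotifOf C a ∧ ∀ b : Motif ι, IsMotifOf C b → MotifLE a b → a = b}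

/-- Two motifs are disjoint if at some index both are non-`*` and they differ. -/
def DisjointMotifs {ι : Type*} (a b : Motif ι) : Prop :=
  ∃ (i : ι) (x : F2), a i = some x ∧ b i = some (1 - x)

/-- Polarization of a motif of length `n`, as a motif of length `2n`
(indexed by `Fin n ⊕ Fin n`; `Sum.inl i` is coordinate `i`, `Sum.inr i` is coordinate `n+i`). -/
def polMotif {n : ℕ} (a : Motif (Fin n)) : Motif (Fin n ⊕ Fin n)
  | Sum.inl i => if a i = some 0 then some 0 else none
  | Sum.inr i => if a i = some 1 then some 0 else none

/-- The bar of a motif: `0 ↦ 1`, `1 ↦ 0`, `* ↦ *`. -/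
def barMotif {ι : Type*} (a : Motif ι) : Motif ι :=
  fun i => (a i).map (fun x => 1 - x)

/-- The polarization of a code `C ⊆ F₂ⁿ`: the union of the varieties of the
polarizations of the maximal motifs of `C`. -/
def polCode {n : ℕ} (C : Set (Fin n → F2)) : Set ((Fin n ⊕ Fin n) → F2) :=
  ⋃ a ∈ maxMot C, variety (polMotif a)

/-- The code `over-over-D-p` : the union of the varieties of `bar (pol (bar b))`
over the maximal motifs `b` of `D`. -/
def barPolBarCode {n : ℕ} (D : Set (Fin n → F2)) : Set ((Fin n ⊕ Fin n) → F2) :=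
  ⋃ b ∈ maxMot D, variety (barMotif (polMotif (barMotif b)))

/-- The formal polarization of a code `C`: the complement of `barPolBarCode` of `Cᶜ`. -/
def formalPol {n : ℕ} (C : Set (Fin n → F2)) : Set ((Fin n ⊕ Fin n) → F2) :=
  (barPolBarCode Cᶜ)ᶜ

/-- The Lagrange polynomial of a motif. -/
noncomputable def lagrange {ι : Type*} [Fintype ι] (a : Motif ι) : MvPolynomial ι F2 :=
  (∏ i ∈ Finset.univ.filter (fun i => a i = some 1), X i) *
    ∏ j ∈ Finset.univ.filter (fun j => a j = some 0), (1 - X j)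

/-- The motif (with no stars) corresponding to a word. -/
def wordMotif {ι : Type*} (w : ι → F2) : Motif ι := fun i => some (w i)

/-- The neural ideal of a code: generated by the Lagrange polynomials of the
words in the complement of the code. -/
noncomputable def neuralIdeal {ι : Type*} [Fintype ι] (C : Set (ι → F2)) :
    Ideal (MvPolynomial ι F2) :=
  Ideal.span ((fun w => lagrange (wordMotif w)) '' Cᶜ)

/-- The pseudo-monomial `∏_{i ∈ σ} X i * ∏_{j ∈ τ} (1 - X j)`. -/
noncomputable def pm {ι : Type*} (σ τ : Finset ι) : MvPolynomial ι F2 :=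
  (∏ i ∈ σ, X i) * ∏ j ∈ τ, (1 - X j)

/-- A polynomial is a pseudo-monomial if it equals `pm σ τ` for disjoint `σ τ`. -/
def IsPseudoMonomial {ι : Type*} (f : MvPolynomial ι F2) : Prop :=
  ∃ σ τ : Finset ι, Disjoint σ τ ∧ f = pm σ τ

/-- The canonical form of an ideal: the set of its minimal pseudo-monomials, i.e.
pseudo-monomials `f ∈ I` such that no pseudo-monomial `g ∈ I` of strictly smaller
degree divides `f`. -/
def CF {ι : Type*} (I : Ideal (MvPolynomial ι F2)) : Set (MvPolynomial ι F2) :=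
  {f | IsPseudoMonomial f ∧ f ∈ I ∧
    ¬ ∃ g : MvPolynomial ι F2, IsPseudoMonomial g ∧ g ∈ I ∧
      g.totalDegree < f.totalDegree ∧ g ∣ f}

/-- The polarization of the pseudo-monomial with data `(σ, τ)`:
`∏_{i ∈ σ} X i * ∏_{j ∈ τ} Y j` (here `Y j = X (Sum.inr j)`). -/
noncomputable def ppm {n : ℕ} (σ τ : Finset (Fin n)) : MvPolynomial (Fin n ⊕ Fin n) F2 :=
  (∏ i ∈ σ, X (Sum.inl i)) * ∏ j ∈ τ, X (Sum.inr j)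

/-- `g` is the polarization of the pseudo-monomial `f`. -/
def PolPM {n : ℕ} (f : MvPolynomial (Fin n) F2) (g : MvPolynomial (Fin n ⊕ Fin n) F2) : Prop :=
  ∃ σ τ : Finset (Fin n), Disjoint σ τ ∧ f = pm σ τ ∧ g = ppm σ τ

/-- The set of polarizations of the elements of a set of pseudo-monomials. -/
def polSet {n : ℕ} (S : Set (MvPolynomial (Fin n) F2)) :
    Set (MvPolynomial (Fin n ⊕ Fin n) F2) :=
  {g | ∃ f ∈ S, PolPM f g}

/-- The prime ideal of a motif: generated by `X i` for `a i = 0`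
and `1 - X j` for `a j = 1`. -/
noncomputable def pIdeal {ι : Type*} (a : Motif ι) : Ideal (MvPolynomial ι F2) :=
  Ideal.span ({f | ∃ i, a i = some 0 ∧ f = X i} ∪ {f | ∃ j, a j = some 1 ∧ f = 1 - X j})

/-!
Both inclusions fail exactly when some word lies in `C ∩ D`. A code is the union of the varieties
of its maximal motifs, so this happens iff the varieties of some `a ∈ MaxMot C` and
`b ∈ MaxMot D` meet, i.e. iff `a` and `b` are not disjoint motifs. Polarization preserves
disjointness: `bar(pol(bar b))` and `pol a` clash at coordinate `i` (resp. `n + i`) exactly when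
`b i = 1, a i = 0` (resp. `b i = 0, a i = 1`).
-/

theorem F2.ne_one_sub_self : ∀ x : F2, x ≠ 1 - x := by decide

theorem F2.eq_one_sub_of_ne : ∀ {x y : F2}, x ≠ y → y = 1 - x := by decide

section Motifs

variable {ι : Type*}

theorem MotifLE.trans {a b c : Motif ι} (hab : MotifLE a b) (hbc : MotifLE b c) :
    MotifLE a c :=
  fun i x h => hab i x (hbc i x h)

def motifSupport (a : Motif ι) : Set ι := {i | (a i).isSome}

theorem MotifLE.motifSupport_subset {a b : Motif ι} (h : MotifLE a b) :
    motifSupport b ⊆ motifSupport a := by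
  intro i hi
  obtain ⟨x, hx⟩ := Option.isSome_iff_exists.mp hi
  simp [motifSupport, h i x hx]

theorem MotifLE.eq_of_motifSupport_subset {a b : Motif ι} (h : MotifLE a b)
    (hsupp : motifSupport a ⊆ motifSupport b) : a = b := by
  funext i
  cases hb : b i with
  | some x => exact h i x hb
  | none =>
    by_contra ha
    have : i ∈ motifSupport b := hsupp (by simpa [motifSupport, Option.isSome_iff_ne_none] using ha)
    simp [motifSupport, hb] at this

theorem MotifLE.ncard_motifSupport_lt [Finite ι] {a b : Motif ι} (h : MotifLE a b)
    (hne : a ≠ b) : (motifSupport b).ncard < (motifSupport a).ncard :=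
  Set.ncard_lt_ncard ⟨h.motifSupport_subset, fun hsupp => hne (h.eq_of_motifSupport_subset hsupp)⟩

theorem exists_mem_maxMot_le [Finite ι] {C : Set (ι → F2)} {b : Motif ι} (hb : IsMotifOf C b) :
    ∃ a ∈ maxMot C, MotifLE b a := by
  -- a motif above `b` with fewest specified coordinates is maximal
  obtain ⟨a, ⟨haC, hba⟩, hmin⟩ := Set.exists_min_image {c | IsMotifOf C c ∧ MotifLE b c}
    (fun c => (motifSupport c).ncard) (Set.toFinite _) ⟨b, hb, fun _ _ h => h⟩
  refine ⟨a, ⟨haC, fun c hcC hac => ?_⟩, hba⟩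
  by_contra hne
  exact (hmin c ⟨hcC, hba.trans hac⟩).not_gt (hac.ncard_motifSupport_lt hne)

theorem mem_variety_iff_wordMotif_le {w : ι → F2} {a : Motif ι} :
    w ∈ variety a ↔ MotifLE (wordMotif w) a :=
  forall₂_congr fun _ _ => imp_congr_right fun _ => Option.some_inj.symm

theorem variety_wordMotif (w : ι → F2) : variety (wordMotif w) = {w} := by
  ext v
  simp only [variety, wordMotif, Option.some_inj, Set.mem_singleton_iff]
  exact ⟨fun h => funext fun i => h i _ rfl, fun h i x hx => h ▸ hx⟩

theorem biUnion_variety_maxMot [Finite ι] (C : Set (ι → F2)) :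
    ⋃ a ∈ maxMot C, variety a = C := by
  refine subset_antisymm (Set.iUnion₂_subset fun a ha => ha.1) fun w hw => ?_
  have hwC : IsMotifOf C (wordMotif w) := by
    rwa [IsMotifOf, variety_wordMotif, Set.singleton_subset_iff]
  obtain ⟨a, ha, hwa⟩ := exists_mem_maxMot_le hwC
  exact Set.mem_biUnion ha (mem_variety_iff_wordMotif_le.mpr hwa)

theorem variety_inter_nonempty_iff {a b : Motif ι} :
    (variety a ∩ variety b).Nonempty ↔ ¬ DisjointMotifs a b := by
  constructor
  · rintro ⟨w, hwa, hwb⟩ ⟨i, x, hax, hbx⟩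
    exact F2.ne_one_sub_self x ((hwa i x hax).symm.trans (hwb i _ hbx))
  · intro hdisj
    refine ⟨fun i => (a i).getD ((b i).getD 0), fun i x hx => by simp [hx], fun i y hy => ?_⟩
    cases ha : a i with
    | none => simp [ha, hy]
    | some x =>
      by_contra hxy
      simp only [ha, Option.getD_some] at hxy
      exact hdisj ⟨i, x, ha, F2.eq_one_sub_of_ne hxy ▸ hy⟩

end Motifs

section Polarization

variable {n : ℕ}

theorem barMotif_polMotif_barMotif_inl (b : Motif (Fin n)) (i : Fin n) :
    barMotif (polMotif (barMotif b)) (Sum.inl i) = if b i = some 1 then some 1 else none := by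
  cases hb : b i with
  | none => simp [barMotif, polMotif, hb]
  | some x => fin_cases x <;> simp [barMotif, polMotif, hb] <;> decide

theorem barMotif_polMotif_barMotif_inr (b : Motif (Fin n)) (i : Fin n) :
    barMotif (polMotif (barMotif b)) (Sum.inr i) = if b i = some 0 then some 1 else none := by
  cases hb : b i with
  | none => simp [barMotif, polMotif, hb]
  | some x => fin_cases x <;> simp [barMotif, polMotif, hb]

theorem disjointMotifs_barMotif_polMotif_iff {a b : Motif (Fin n)} :
    DisjointMotifs (barMotif (polMotif (barMotif b))) (polMotif a) ↔ DisjointMotifs b a := by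
  simp only [DisjointMotifs, Sum.exists, ← exists_or]
  refine exists_congr fun i => ?_
  simp only [barMotif_polMotif_barMotif_inl, barMotif_polMotif_barMotif_inr, polMotif]
  rcases a i with _ | x <;> rcases b i with _ | y <;> simp
  revert x y
  decide

end Polarization

/-- `D ⊆ ᶜC` iff `bar((bar D)ᵖ) ⊆ ᶜ(Cᵖ)`. -/
theorem subset_compl_iff_polarized {n : ℕ} (C D : Set (Fin n → F2)) :
    D ⊆ Cᶜ ↔ barPolBarCode D ⊆ (polCode C)ᶜ := by
  rw [Set.subset_compl_iff_disjoint_right, Set.subset_compl_iff_disjoint_right, ← not_iff_not,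
    Set.not_disjoint_iff_nonempty_inter, Set.not_disjoint_iff_nonempty_inter]
  conv_lhs => rw [← biUnion_variety_maxMot D, ← biUnion_variety_maxMot C]
  simp only [barPolBarCode, polCode, Set.iUnion₂_inter, Set.inter_iUnion₂, Set.nonempty_biUnion,
    variety_inter_nonempty_iff, disjointMotifs_barMotif_polMotif_iff]
end

section
/- Let C ⊆ F_2^n be a neural code. Then MaxMot(C^p) ⊆ MaxMot(C^[p]); that is, every maximal motif of the polarized code C^p is a maximal motif of the formal polarization C^[p]. -/
open MvPolynomial

lemma F2_cases (x : F2) : x = 0 ∨ x = 1 := by revert x; decide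

lemma motifLE_trans {ι : Type*} {a b c : Motif ι} (h1 : MotifLE a b) (h2 : MotifLE b c) :
    MotifLE a c := fun i x hx => h1 i x (h2 i x hx)

lemma mem_variety {ι : Type*} {a : Motif ι} {w : ι → F2} :
    w ∈ variety a ↔ ∀ (i : ι) (x : F2), a i = some x → w i = x := Iff.rfl

lemma exists_mem_inter {ι : Type*} (a b : Motif ι)
    (h : ∀ (j : ι) (x y : F2), a j = some x → b j = some y → x = y) :
    ∃ w, w ∈ variety a ∧ w ∈ variety b := by
  refine ⟨fun j => (a j).getD ((b j).getD 0), ?_, ?_⟩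
  · intro j x hx; simp [hx]
  · intro j y hy
    cases ha : a j with
    | none => simp [ha, hy]
    | some x => simp [ha, h j x y ha hy]

lemma exists_maxMot_ge {ι : Type*} [Fintype ι] {D : Set (ι → F2)} {a : Motif ι}
    (ha : IsMotifOf D a) : ∃ b ∈ maxMot D, MotifLE a b := by
  classical
  suffices h : ∀ (k : ℕ) (a : Motif ι),
      (Finset.univ.filter fun i => a i ≠ none).card ≤ k →
      IsMotifOf D a → ∃ b ∈ maxMot D, MotifLE a b from
    h _ a le_rfl ha
  intro k
  induction k with
  | zero =>
    intro a hcard ha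
    refine ⟨a, ⟨ha, ?_⟩, fun i x hx => hx⟩
    intro b hb hle
    funext i
    by_contra hne
    have hione : a i ≠ none := by
      intro h0
      cases hbi : b i with
      | none => exact hne (h0.trans hbi.symm)
      | some x => exact hne ((hle i x hbi).trans hbi.symm)
    have : i ∈ Finset.univ.filter fun i => a i ≠ none := by simp [hione]
    simp only [Nat.le_zero, Finset.card_eq_zero] at hcard
    simp [hcard] at this
  | succ k ih =>
    intro a hcard ha
    by_cases hmax : ∀ b : Motif ι, IsMotifOf D b → MotifLE a b → a = b
    · exact ⟨a, ⟨ha, hmax⟩, fun i x hx => hx⟩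
    · push_neg at hmax
      obtain ⟨c, hc, hle, hne⟩ := hmax
      have hsub : (Finset.univ.filter fun i => c i ≠ none) ⊂
          (Finset.univ.filter fun i => a i ≠ none) := by
        constructor
        · intro i hi
          simp only [Finset.mem_filter, Finset.mem_univ, true_and] at hi ⊢
          cases hci : c i with
          | none => exact absurd hci hi
          | some x => rw [hle i x hci]; simp
        · intro hcon
          apply hne
          funext i
          cases hci : c i with
          | some x => exact hle i x hci
          | none =>
            by_contra hne2
            have hi : i ∈ Finset.univ.filter fun i => a i ≠ none := by
              simp only [Finset.mem_filter, Finset.mem_univ, true_and]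
              exact hne2
            have := hcon hi
            simp [hci] at this
      have hlt := Finset.card_lt_card hsub
      obtain ⟨b, hb, hbe⟩ := ih c (by omega) hc
      exact ⟨b, hb, motifLE_trans hle hbe⟩

lemma q_aux1 : ∀ o : Option F2,
    Option.map (fun x : F2 => 1 - x)
      (if Option.map (fun x : F2 => 1 - x) o = some (0 : F2) then some (0 : F2) else none) =
      if o = some (1 : F2) then some (1 : F2) else none := by decide

lemma q_aux2 : ∀ o : Option F2,
    Option.map (fun x : F2 => 1 - x)
      (if Option.map (fun x : F2 => 1 - x) o = some (1 : F2) then some (0 : F2) else none) =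
      if o = some (0 : F2) then some (1 : F2) else none := by decide

lemma q_inl {n : ℕ} (b : Motif (Fin n)) (i : Fin n) :
    barMotif (polMotif (barMotif b)) (Sum.inl i) = if b i = some 1 then some 1 else none := by
  simp only [barMotif, polMotif]
  exact q_aux1 (b i)

lemma q_inr {n : ℕ} (b : Motif (Fin n)) (i : Fin n) :
    barMotif (polMotif (barMotif b)) (Sum.inr i) = if b i = some 0 then some 1 else none := by
  simp only [barMotif, polMotif]
  exact q_aux2 (b i)

lemma polCode_subset_formalPol {n : ℕ} (C : Set (Fin n → F2)) :
    polCode C ⊆ formalPol C := by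
  intro w hw
  simp only [polCode, Set.mem_iUnion, exists_prop] at hw
  obtain ⟨m, hm, hwm⟩ := hw
  intro hbad
  simp only [barPolBarCode, Set.mem_iUnion, exists_prop] at hbad
  obtain ⟨b, hb, hwb⟩ := hbad
  have compat : ∀ (j : Fin n) (x y : F2), m j = some x → b j = some y → x = y := by
    intro j x y hmx hby
    rcases F2_cases x with hx | hx <;> rcases F2_cases y with hy | hy <;> subst hx <;> subst hy
    · rfl
    · exfalso
      have h1 : w (Sum.inl j) = 0 := hwm (Sum.inl j) 0 (by simp [polMotif, hmx])
      have h2 : w (Sum.inl j) = 1 := hwb (Sum.inl j) 1 (by rw [q_inl, hby]; simp)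
      rw [h1] at h2; exact absurd h2 (by decide)
    · exfalso
      have h1 : w (Sum.inr j) = 0 := hwm (Sum.inr j) 0 (by simp [polMotif, hmx])
      have h2 : w (Sum.inr j) = 1 := hwb (Sum.inr j) 1 (by rw [q_inr, hby]; simp)
      rw [h1] at h2; exact absurd h2 (by decide)
    · rfl
  obtain ⟨v, hvm, hvb⟩ := exists_mem_inter m b compat
  exact hb.1 hvb (hm.1 hvm)

lemma motif_polCode_le {n : ℕ} {C : Set (Fin n → F2)} {a : Motif (Fin n ⊕ Fin n)}
    (ha : IsMotifOf (polCode C) a) :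
    ∃ m ∈ maxMot C, MotifLE a (polMotif m) := by
  set w : (Fin n ⊕ Fin n) → F2 := fun j => (a j).getD 1 with hwdef
  have hw : w ∈ variety a := fun j x hx => by simp [hwdef, hx]
  have hwP := ha hw
  simp only [polCode, Set.mem_iUnion, exists_prop] at hwP
  obtain ⟨m, hm, hwm⟩ := hwP
  refine ⟨m, hm, ?_⟩
  intro j x hx
  have hx0 : x = 0 ∧ w j = 0 := by
    cases j with
    | inl i =>
      simp only [polMotif] at hx
      split_ifs at hx with h
      exact ⟨(Option.some.inj hx).symm, hwm (Sum.inl i) 0 (by simp [polMotif, h])⟩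
    | inr i =>
      simp only [polMotif] at hx
      split_ifs at hx with h
      exact ⟨(Option.some.inj hx).symm, hwm (Sum.inr i) 0 (by simp [polMotif, h])⟩
  obtain ⟨hx0, hw0⟩ := hx0
  subst hx0
  cases haj : a j with
  | none => rw [hwdef] at hw0; simp [haj] at hw0
  | some z =>
    rw [hwdef] at hw0; simp [haj] at hw0; rw [hw0]

/-- `MaxMot (Cᵖ) ⊆ MaxMot (C^[p])`. -/
theorem maxMot_polCode_subset_maxMot_formalPol {n : ℕ} (C : Set (Fin n → F2)) :
    maxMot (polCode C) ⊆ maxMot (formalPol C) := by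
  classical
  intro a ha
  obtain ⟨haM, haMax⟩ := ha
  obtain ⟨m, hm, hle⟩ := motif_polCode_le haM
  have hpm_motif : IsMotifOf (polCode C) (polMotif m) := fun w hw =>
    Set.mem_iUnion₂.mpr ⟨m, hm, hw⟩
  have hae : a = polMotif m := haMax _ hpm_motif hle
  subst hae
  refine ⟨fun w hw => polCode_subset_formalPol C (haM hw), ?_⟩
  intro c hc hac
  -- facts from hac
  have hcl : ∀ (i : Fin n) (x : F2), c (Sum.inl i) = some x → m i = some 0 ∧ x = 0 := by
    intro i x hx
    have := hac (Sum.inl i) x hx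
    simp only [polMotif] at this
    split_ifs at this with h
    exact ⟨h, (Option.some.inj this).symm⟩
  have hcr : ∀ (i : Fin n) (x : F2), c (Sum.inr i) = some x → m i = some 1 ∧ x = 0 := by
    intro i x hx
    have := hac (Sum.inr i) x hx
    simp only [polMotif] at this
    split_ifs at this with h
    exact ⟨h, (Option.some.inj this).symm⟩
  have hnotboth : ∀ i : Fin n, ¬ (c (Sum.inl i) = some 0 ∧ c (Sum.inr i) = some 0) := by
    rintro i ⟨h1, h2⟩
    have e1 := (hcl i 0 h1).1
    have e2 := (hcr i 0 h2).1
    rw [e1] at e2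
    exact absurd (Option.some.inj e2) (by decide)
  set m' : Motif (Fin n) := fun i =>
    if c (Sum.inl i) = some 0 then some 0
    else if c (Sum.inr i) = some 0 then some 1 else none with hm'def
  have hml : MotifLE m m' := by
    intro i x hx
    rw [hm'def] at hx
    simp only at hx
    split_ifs at hx with h1 h2
    · rw [← Option.some.inj hx]; exact (hcl i 0 h1).1
    · rw [← Option.some.inj hx]; exact (hcr i 0 h2).1
  have hm'C : IsMotifOf C m' := by
    intro v hv
    by_contra hvD
    have hvmot : IsMotifOf Cᶜ (wordMotif v) := by
      intro u hu
      have : u = v := funext fun i => hu i (v i) rfl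
      rw [this]; exact hvD
    obtain ⟨b, hbmax, hble⟩ := exists_maxMot_ge hvmot
    have hvb : ∀ (i : Fin n) (y : F2), b i = some y → v i = y := fun i y hy =>
      Option.some.inj (hble i y hy)
    have compat : ∀ (j : Fin n ⊕ Fin n) (x y : F2),
        c j = some x → barMotif (polMotif (barMotif b)) j = some y → x = y := by
      intro j x y hcx hqy
      exfalso
      cases j with
      | inl i =>
        rw [q_inl] at hqy
        split_ifs at hqy with h
        have hx0 := (hcl i x hcx).2
        have hm'0 : m' i = some 0 := by
          rw [hm'def]; simp only
          rw [if_pos (hx0 ▸ hcx)]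
        have hv0 : v i = 0 := hv i 0 hm'0
        have hv1 : v i = 1 := hvb i 1 h
        rw [hv0] at hv1; exact absurd hv1 (by decide)
      | inr i =>
        rw [q_inr] at hqy
        split_ifs at hqy with h
        have hx0 := (hcr i x hcx).2
        have hcr0 : c (Sum.inr i) = some 0 := hx0 ▸ hcx
        have hcl0 : c (Sum.inl i) ≠ some 0 := fun hl => hnotboth i ⟨hl, hcr0⟩
        have hm'1 : m' i = some 1 := by
          rw [hm'def]; simp only
          rw [if_neg hcl0, if_pos hcr0]
        have hv1 : v i = 1 := hv i 1 hm'1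
        have hv0 : v i = 0 := hvb i 0 h
        rw [hv0] at hv1; exact absurd hv1 (by decide)
    obtain ⟨w, hwc, hwq⟩ := exists_mem_inter c (barMotif (polMotif (barMotif b))) compat
    have hwF : w ∈ formalPol C := hc hwc
    exact hwF (Set.mem_iUnion₂.mpr ⟨b, hbmax, hwq⟩)
  have hmm' : m = m' := hm.2 m' hm'C hml
  funext j
  cases j with
  | inl i =>
    show polMotif m (Sum.inl i) = c (Sum.inl i)
    by_cases h : m i = some 0
    · have hm'0 : m' i = some 0 := hmm' ▸ h
      have hc0 : c (Sum.inl i) = some 0 := by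
        rw [hm'def] at hm'0
        simp only at hm'0
        split_ifs at hm'0 with h1 h2
        · exact h1
        · exact absurd (Option.some.inj hm'0) (by decide)
      rw [hc0]; simp [polMotif, h]
    · have hcnone : c (Sum.inl i) = none := by
        cases hcc : c (Sum.inl i) with
        | none => rfl
        | some x => exact absurd (hcl i x hcc).1 h
      rw [hcnone]; simp [polMotif, h]
  | inr i =>
    show polMotif m (Sum.inr i) = c (Sum.inr i)
    by_cases h : m i = some 1
    · have hm'1 : m' i = some 1 := hmm' ▸ h
      have hc0 : c (Sum.inr i) = some 0 := by
        rw [hm'def] at hm'1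
        simp only at hm'1
        split_ifs at hm'1 with h1 h2
        · exact absurd (Option.some.inj hm'1) (by decide)
        · exact h2
      rw [hc0]; simp [polMotif, h]
    · have hcnone : c (Sum.inr i) = none := by
        cases hcc : c (Sum.inr i) with
        | none => rfl
        | some x => exact absurd (hcr i x hcc).1 h
      rw [hcnone]; simp [polMotif, h]
end
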